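/- If T is a complete routing table and r is a new entry, then the table obtained by adding to T the entry r together with all intersections r ∩ r' for r' ∈ T in conflict with r is again complete. -/

import Mathlib

/-!
Every entry of the extended table lies in `T` or is of the form `r ∩ s` with `s ∈ T ∪ {univ}`
(the entry `r` itself being `r ∩ univ`). Since `T ∪ {univ}` is still complete, the intersection of
two such entries is again of one of these forms, and a nonempty `r ∩ s` with `s ∈ T` is always in
the extended table: it is `s` if `s ⊆ r`, it is `r` if `r ⊆ s`, and otherwise `r` and `s` conflict.
-/

/-- Two entries (identified with the sets of address pairs they match)
    conflict when they intersect and neither contains the other. -/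
def Conflict {α : Type*} (r r' : Set α) : Prop :=
  (r ∩ r').Nonempty ∧ ¬ r ⊆ r' ∧ ¬ r' ⊆ r

/-- Completeness: every nonempty pairwise intersection of entries is an entry. -/
def Complete {α : Type*} (T : Set (Set α)) : Prop :=
  ∀ r₁ ∈ T, ∀ r₂ ∈ T, (r₁ ∩ r₂).Nonempty → r₁ ∩ r₂ ∈ T

def addEntry {α : Type*} (T : Set (Set α)) (r : Set α) : Set (Set α) :=
  T ∪ {r} ∪ {t | ∃ r' ∈ T, Conflict r r' ∧ t = r ∩ r'}

section addEntry

variable {α : Type*} {T : Set (Set α)} {r s t : Set α}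

theorem mem_addEntry_self : r ∈ addEntry T r :=
  Or.inl (Or.inr rfl)

theorem inter_mem_addEntry (hs : s ∈ T) (hne : (r ∩ s).Nonempty) : r ∩ s ∈ addEntry T r := by
  by_cases hsr : s ⊆ r
  · rw [Set.inter_eq_right.mpr hsr]
    exact Or.inl (Or.inl hs)
  by_cases hrs : r ⊆ s
  · rw [Set.inter_eq_left.mpr hrs]
    exact mem_addEntry_self
  · exact Or.inr ⟨s, hs, ⟨hne, hrs, hsr⟩, rfl⟩

theorem inter_mem_addEntry_of_mem_insert_univ (hs : s ∈ insert Set.univ T)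
    (hne : (r ∩ s).Nonempty) : r ∩ s ∈ addEntry T r := by
  rcases hs with rfl | hs
  · rw [Set.inter_univ]
    exact mem_addEntry_self
  · exact inter_mem_addEntry hs hne

theorem mem_or_exists_eq_inter_of_mem_addEntry (ht : t ∈ addEntry T r) :
    t ∈ T ∨ ∃ s ∈ insert Set.univ T, t = r ∩ s := by
  rcases ht with (ht | rfl) | ⟨s, hs, -, rfl⟩
  · exact Or.inl ht
  · exact Or.inr ⟨Set.univ, Set.mem_insert _ _, (Set.inter_univ t).symm⟩
  · exact Or.inr ⟨s, Set.mem_insert_of_mem _ hs, rfl⟩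

end addEntry

namespace Complete

variable {α : Type*} {T : Set (Set α)}

theorem insert_univ (hT : Complete T) : Complete (insert Set.univ T) := by
  rintro r₁ (rfl | h₁) r₂ (rfl | h₂) hne
  · rw [Set.inter_self]; exact Set.mem_insert _ _
  · rw [Set.univ_inter]; exact Set.mem_insert_of_mem _ h₂
  · rw [Set.inter_univ]; exact Set.mem_insert_of_mem _ h₁
  · exact Set.mem_insert_of_mem _ (hT r₁ h₁ r₂ h₂ hne)

theorem inter_inter_mem_addEntry (hT : Complete T) {r s t : Set α}
    (hs : s ∈ insert Set.univ T) (ht : t ∈ insert Set.univ T) (hne : (r ∩ (s ∩ t)).Nonempty) :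
    r ∩ (s ∩ t) ∈ addEntry T r :=
  inter_mem_addEntry_of_mem_insert_univ
    (hT.insert_univ s hs t ht (hne.mono Set.inter_subset_right)) hne

theorem addEntry (hT : Complete T) (r : Set α) : Complete (addEntry T r) := by
  intro r₁ h₁ r₂ h₂ hne
  rcases mem_or_exists_eq_inter_of_mem_addEntry h₁ with h₁ | ⟨s₁, hs₁, rfl⟩ <;>
    rcases mem_or_exists_eq_inter_of_mem_addEntry h₂ with h₂ | ⟨s₂, hs₂, rfl⟩
  · exact Or.inl (Or.inl (hT r₁ h₁ r₂ h₂ hne))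
  · rw [Set.inter_left_comm] at hne ⊢
    exact hT.inter_inter_mem_addEntry (Set.mem_insert_of_mem _ h₁) hs₂ hne
  · rw [Set.inter_assoc] at hne ⊢
    exact hT.inter_inter_mem_addEntry hs₁ (Set.mem_insert_of_mem _ h₂) hne
  · rw [← Set.inter_inter_distrib_left] at hne ⊢
    exact hT.inter_inter_mem_addEntry hs₁ hs₂ hne

end Complete

theorem stmt12_general {α : Type*} (T : Set (Set α))
    (hT : Complete T) (r : Set α) :
    Complete (T ∪ {r} ∪ {t | ∃ r' ∈ T, Conflict r r' ∧ t = r ∩ r'}) :=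
  hT.addEntry r

/-- Adding to a complete table a new entry `r` together with the intersections
    `r ∩ r'` for every entry `r'` in conflict with `r` yields a complete table. -/
theorem stmt12 {α : Type*} (T : Set (Set α)) (hfin : T.Finite)
    (hT : Complete T) (r : Set α) :
    Complete (T ∪ {r} ∪ {t | ∃ r' ∈ T, Conflict r r' ∧ t = r ∩ r'}) :=
  stmt12_general T hT r
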